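/- Let N: M_d → M_d be any CPT map, and define Φ: M_d → M_2 ⊗ M_d by Φ(ρ) = ½|0⟩⟨0|⊗ρ + ½|1⟩⟨1|⊗N(ρ). Then Φ is degradable: the map Ψ defined on product states by Ψ(τ⊗γ) = ⟨0|τ|0⟩ N^C(γ) ⊕ ⟨1|τ|1⟩ (Tr γ)·σ (where the direct sum structure matches Φ^C) is a CPT map satisfying Ψ∘Φ = Φ^C, where Φ^C(ρ) = ½|0⟩⟨0| (Tr ρ) + ½|1⟩⟨1|⊗N^C(ρ). -/

import Mathlib

/-!
Up to the factor `1/√2`, the Kraus operators of `Φ` are `|0⟩ ⊗ I` and `|1⟩ ⊗ B_k`. Because the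
flags are orthogonal, `Φ(ρ) = ½ (|0⟩⟨0| ⊗ ρ + |1⟩⟨1| ⊗ N(ρ))` and the cross terms of `Φ^C` vanish,
so `Φ^C(ρ) = ½ (Tr ρ · |0⟩⟨0| ⊕ N^C(ρ))`. The degrading map reads the flag: on the `|0⟩` block
it applies `N^C`, on the `|1⟩` block it takes the trace and prepares `|0⟩`; as `N` preserves
the trace, `Tr N(ρ) = Tr ρ`. Being given by Kraus operators, it is completely positive, and it
preserves the trace because the complementary Kraus operators `R_r` of `N` satisfy
`∑ R_rᴴ R_r = ∑ B_kᴴ B_k = 1`.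
-/

open Matrix Kronecker BigOperators ComplexOrder

noncomputable def krausMap {n m ι : Type*} [Fintype n] [Fintype ι]
    (A : ι → Matrix m n ℂ) : Matrix n n ℂ →ₗ[ℂ] Matrix m m ℂ where
  toFun ρ := ∑ k, A k * ρ * (A k)ᴴ
  map_add' ρ σ := by
    simp [Matrix.mul_add, Matrix.add_mul, Finset.sum_add_distrib]
  map_smul' c ρ := by
    simp [Matrix.mul_smul, Matrix.smul_mul, Finset.smul_sum]

noncomputable def complementMap {n m ι : Type*} [Fintype n] [Fintype m] [Fintype ι]
    (A : ι → Matrix m n ℂ) : Matrix n n ℂ →ₗ[ℂ] Matrix ι ι ℂ where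
  toFun ρ := Matrix.of fun j k => (A j * ρ * (A k)ᴴ).trace
  map_add' ρ σ := by
    ext j k
    simp [Matrix.mul_add, Matrix.add_mul]
  map_smul' c ρ := by
    ext j k
    simp [Matrix.mul_smul, Matrix.smul_mul]

noncomputable def choi {n m : Type*} [Fintype n] [DecidableEq n]
    (Φ : Matrix n n ℂ →ₗ[ℂ] Matrix m m ℂ) : Matrix (n × m) (n × m) ℂ :=
  Matrix.of fun p q => Φ (Matrix.single p.1 q.1 1) p.2 q.2

def IsCPTP {n m : Type*} [Fintype n] [DecidableEq n] [Fintype m]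
    (Φ : Matrix n n ℂ →ₗ[ℂ] Matrix m m ℂ) : Prop :=
  (choi Φ).PosSemidef ∧ ∀ ρ, (Φ ρ).trace = ρ.trace

def IsKrausRep {n m ι : Type*} [Fintype n] [DecidableEq n] [Fintype m] [Fintype ι]
    (A : ι → Matrix m n ℂ) (Φ : Matrix n n ℂ →ₗ[ℂ] Matrix m m ℂ) : Prop :=
  (∀ ρ, Φ ρ = ∑ k, A k * ρ * (A k)ᴴ) ∧ ∑ k, (A k)ᴴ * A k = 1

def Degradable {n m : Type*} [Fintype n] [DecidableEq n] [Fintype m] [DecidableEq m]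
    (Φ : Matrix n n ℂ →ₗ[ℂ] Matrix m m ℂ) : Prop :=
  ∃ (e : ℕ) (A : Fin e → Matrix m n ℂ), IsKrausRep A Φ ∧
    ∃ Ψ : Matrix m m ℂ →ₗ[ℂ] Matrix (Fin e) (Fin e) ℂ,
      IsCPTP Ψ ∧ Ψ ∘ₗ Φ = complementMap A

def AntiDegradable {n m : Type*} [Fintype n] [DecidableEq n] [Fintype m] [DecidableEq m]
    (Φ : Matrix n n ℂ →ₗ[ℂ] Matrix m m ℂ) : Prop :=
  ∃ (e : ℕ) (A : Fin e → Matrix m n ℂ), IsKrausRep A Φ ∧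
    ∃ Λ : Matrix (Fin e) (Fin e) ℂ →ₗ[ℂ] Matrix m m ℂ,
      IsCPTP Λ ∧ Λ ∘ₗ complementMap A = Φ

/-- The Kraus operators `{ |0⟩⊗I/√2 } ∪ { |1⟩⊗B_k/√2 }` of the flagged channel
`Φ(ρ) = ½|0⟩⟨0|⊗ρ + ½|1⟩⟨1|⊗N(ρ)`, where `B` is a Kraus family for `N`. -/
noncomputable def bigA {d f : ℕ} (B : Fin f → Matrix (Fin d) (Fin d) ℂ) :
    Fin (f + 1) → Matrix (Fin 2 × Fin d) (Fin d) ℂ :=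
  Fin.cases
    (Matrix.of fun p j => if p.1 = 0 ∧ p.2 = j then (Real.sqrt 2 : ℂ)⁻¹ else 0)
    (fun k => Matrix.of fun p j => if p.1 = 1 then (Real.sqrt 2 : ℂ)⁻¹ * B k p.2 j else 0)

section Kraus

variable {m n ι κ : Type*} [Fintype n]

lemma krausMap_single [DecidableEq ι] [DecidableEq n] (k : ι) (Y : Matrix n n ℂ) :
    krausMap (fun i => (single k i 1 : Matrix ι n ℂ)) Y = single k k Y.trace := by
  simp only [krausMap, LinearMap.coe_mk, AddHom.coe_mk, conjTranspose_single, star_one,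
    single_mul_mul_single, one_mul, mul_one, Matrix.trace, diag_apply]
  exact (map_sum (singleAddMonoidHom k k : ℂ →+ Matrix ι ι ℂ) _ _).symm

variable [Fintype ι]

lemma krausMap_apply (A : ι → Matrix m n ℂ) (ρ : Matrix n n ℂ) :
    krausMap A ρ = ∑ k, A k * ρ * (A k)ᴴ := rfl

lemma krausMap_smul (c : ℂ) (A : ι → Matrix m n ℂ) :
    krausMap (c • A) = (c * star c) • krausMap A := by
  ext1 ρ
  simp only [krausMap_apply, LinearMap.smul_apply, Finset.smul_sum, Pi.smul_apply,
    conjTranspose_smul, Matrix.smul_mul, Matrix.mul_smul, smul_smul, mul_comm]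

lemma krausMap_sumElim [Fintype κ] (A : ι → Matrix m n ℂ) (A' : κ → Matrix m n ℂ)
    (ρ : Matrix n n ℂ) : krausMap (Sum.elim A A') ρ = krausMap A ρ + krausMap A' ρ :=
  Fintype.sum_sum_type _

lemma choi_krausMap [DecidableEq n] (A : ι → Matrix m n ℂ) :
    choi (krausMap A) = ∑ k, vecMulVec (fun p => A k p.2 p.1) (star fun p => A k p.2 p.1) := by
  ext p q
  simp [choi, krausMap_apply, Matrix.sum_apply, Matrix.mul_apply, vecMulVec_apply, single_apply,
    ite_and]

lemma trace_krausMap [Fintype m] [DecidableEq n] {A : ι → Matrix m n ℂ}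
    (hA : ∑ k, (A k)ᴴ * A k = 1) (ρ : Matrix n n ℂ) : (krausMap A ρ).trace = ρ.trace := by
  rw [krausMap_apply, trace_sum]
  simp_rw [trace_mul_cycle (A _)]
  rw [← trace_sum, ← Finset.sum_mul, hA, Matrix.one_mul]

theorem isCPTP_krausMap [Fintype m] [DecidableEq n] {A : ι → Matrix m n ℂ}
    (hA : ∑ k, (A k)ᴴ * A k = 1) : IsCPTP (krausMap A) :=
  ⟨choi_krausMap A ▸ posSemidef_sum _ fun _ _ => posSemidef_vecMulVec_self_star _,
    trace_krausMap hA⟩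

end Kraus

section Complement

variable {m n ι : Type*} [Fintype m] [Fintype ι]

def complementKraus (A : ι → Matrix m n ℂ) (r : m) : Matrix ι n ℂ :=
  of fun s j => A s r j

lemma complementMap_eq_krausMap [Fintype n] (A : ι → Matrix m n ℂ) :
    complementMap A = krausMap (complementKraus A) := by
  ext ρ s t
  simp [complementMap, krausMap_apply, complementKraus, Matrix.trace, Matrix.sum_apply,
    Matrix.mul_apply]

lemma complementMap_smul [Fintype n] (c : ℂ) (A : ι → Matrix m n ℂ) :
    complementMap (c • A) = (c * star c) • complementMap A := by
  rw [complementMap_eq_krausMap, complementMap_eq_krausMap,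
    show complementKraus (c • A) = c • complementKraus A from rfl, krausMap_smul]

lemma sum_conjTranspose_complementKraus_mul_self (A : ι → Matrix m n ℂ) :
    ∑ r, (complementKraus A r)ᴴ * complementKraus A r = ∑ k, (A k)ᴴ * A k := by
  ext b c
  simp only [Matrix.sum_apply, Matrix.mul_apply, conjTranspose_apply, complementKraus, of_apply]
  exact Finset.sum_comm

end Complement

section KetKron

variable {τ m n α : Type*} [DecidableEq τ]

def ketKron [Zero α] (i : τ) (M : Matrix m n α) : Matrix (τ × m) n α :=
  of fun p j => if p.1 = i then M p.2 j else 0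

lemma ketKron_mul {k : Type*} [Fintype n] [NonUnitalNonAssocSemiring α] (i : τ)
    (M : Matrix m n α) (X : Matrix n k α) :
    ketKron i M * X = ketKron i (M * X) := by
  ext p j
  by_cases h : p.1 = i <;> simp [ketKron, Matrix.mul_apply, h]

lemma ketKron_mul_conjTranspose_ketKron {m' : Type*} [Fintype n] [Semiring α] [StarRing α]
    (i j : τ) (M : Matrix m n α) (N : Matrix m' n α) :
    ketKron i M * (ketKron j N)ᴴ = single i j 1 ⊗ₖ (M * Nᴴ) := by
  ext p q
  by_cases hp : p.1 = i <;> by_cases hq : q.1 = j <;>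
    simp [ketKron, Matrix.mul_apply, hp, hq, Ne.symm]

lemma ketKron_mul_mul_conjTranspose_ketKron {m' : Type*} [Fintype n] [Semiring α] [StarRing α]
    (i j : τ) (M : Matrix m n α) (ρ : Matrix n n α) (N : Matrix m' n α) :
    ketKron i M * ρ * (ketKron j N)ᴴ = single i j 1 ⊗ₖ (M * ρ * Nᴴ) := by
  rw [ketKron_mul, ketKron_mul_conjTranspose_ketKron]

lemma conjTranspose_ketKron_mul_mul_ketKron [Fintype τ] [Fintype m] {m' n' : Type*} [Fintype m']
    [Semiring α] [StarRing α] (i j : τ) (M : Matrix m n α) (X : Matrix (τ × m) (τ × m') α)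
    (N : Matrix m' n' α) :
    (ketKron i M)ᴴ * X * ketKron j N = Mᴴ * X.submatrix (i, ·) (j, ·) * N := by
  ext a b
  simp [ketKron, Matrix.mul_apply, Fintype.sum_prod_type, Finset.sum_mul, apply_ite star, ite_mul]

lemma krausMap_conjTranspose_ketKron [Fintype τ] [Fintype m] {ι : Type*} [Fintype ι] (i : τ)
    (A : ι → Matrix n m ℂ) (X : Matrix (τ × m) (τ × m) ℂ) :
    krausMap (fun k => (ketKron i (A k)ᴴ)ᴴ) X = krausMap A (X.submatrix (i, ·) (i, ·)) := by
  simp only [krausMap_apply, conjTranspose_conjTranspose, conjTranspose_ketKron_mul_mul_ketKron]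

lemma submatrix_single_kronecker {m' : Type*} [MulZeroOneClass α] (i j a b : τ)
    (Y : Matrix m m' α) :
    (single i j (1 : α) ⊗ₖ Y).submatrix (a, ·) (b, ·) = single i j (1 : α) a b • Y := by
  ext
  simp

end KetKron

lemma kronecker_sum {l m n p ι α : Type*} [CommSemiring α] [Fintype ι] (A : Matrix l m α)
    (B : ι → Matrix n p α) : A ⊗ₖ ∑ i, B i = ∑ i, A ⊗ₖ B i :=
  map_sum (kroneckerBilinear (R := α) A) B _

lemma inv_sqrt_two_mul_star : (Real.sqrt 2 : ℂ)⁻¹ * star (Real.sqrt 2 : ℂ)⁻¹ = 2⁻¹ := by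
  rw [star_inv₀, Complex.star_def, Complex.conj_ofReal, ← mul_inv, ← Complex.ofReal_mul,
    Real.mul_self_sqrt zero_le_two, Complex.ofReal_ofNat]

section Flagged

variable {d f : ℕ} (B : Fin f → Matrix (Fin d) (Fin d) ℂ)

def flaggedKraus : Fin (f + 1) → Matrix (Fin 2 × Fin d) (Fin d) ℂ :=
  Fin.cons (ketKron 0 1) fun k => ketKron 1 (B k)

lemma bigA_eq_smul_flaggedKraus : bigA B = (Real.sqrt 2 : ℂ)⁻¹ • flaggedKraus B := by
  funext k
  induction k using Fin.cases <;> ext p j <;>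
    simp [bigA, flaggedKraus, ketKron, one_apply, ite_and]

lemma krausMap_flaggedKraus (ρ : Matrix (Fin d) (Fin d) ℂ) :
    krausMap (flaggedKraus B) ρ = single 0 0 1 ⊗ₖ ρ + single 1 1 1 ⊗ₖ krausMap B ρ := by
  simp only [krausMap_apply, Fin.sum_univ_succ, flaggedKraus, Fin.cons_zero, Fin.cons_succ,
    ketKron_mul_mul_conjTranspose_ketKron, Matrix.one_mul, conjTranspose_one, Matrix.mul_one,
    kronecker_sum]

lemma complementMap_flaggedKraus (ρ : Matrix (Fin d) (Fin d) ℂ) :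
    complementMap (flaggedKraus B) ρ =
      complementMap (Fin.cons 0 B : Fin (f + 1) → Matrix (Fin d) (Fin d) ℂ) ρ +
        single 0 0 ρ.trace := by
  ext s t
  induction s using Fin.cases <;> induction t using Fin.cases <;>
    simp [complementMap, flaggedKraus, ketKron_mul_mul_conjTranspose_ketKron, trace_kronecker,
      (Fin.succ_ne_zero _).symm]

-- `Fin.cons 0 B` pads the Kraus family of `N` with a zero operator, so that its complement is
-- `N^C` placed on the indices `Fin.succ _` of the environment of `Φ`.
def degradingKraus : Fin d ⊕ Fin d → Matrix (Fin (f + 1)) (Fin 2 × Fin d) ℂ :=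
  Sum.elim
    (fun r => (ketKron 0 (complementKraus
      (Fin.cons 0 B : Fin (f + 1) → Matrix (Fin d) (Fin d) ℂ) r)ᴴ)ᴴ)
    (fun i => (ketKron 1 (single 0 i 1)ᴴ)ᴴ)

lemma krausMap_degradingKraus (X : Matrix (Fin 2 × Fin d) (Fin 2 × Fin d) ℂ) :
    krausMap (degradingKraus B) X =
      complementMap (Fin.cons 0 B : Fin (f + 1) → Matrix (Fin d) (Fin d) ℂ)
          (X.submatrix (0, ·) (0, ·)) + single 0 0 (X.submatrix (1, ·) (1, ·)).trace := by
  rw [degradingKraus, krausMap_sumElim, krausMap_conjTranspose_ketKron,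
    krausMap_conjTranspose_ketKron, krausMap_single, complementMap_eq_krausMap]

lemma sum_conjTranspose_degradingKraus_mul_self (hB : ∑ k, (B k)ᴴ * B k = 1) :
    ∑ l, (degradingKraus B l)ᴴ * degradingKraus B l = 1 := by
  simp only [Fintype.sum_sum_type, degradingKraus, Sum.elim_inl, Sum.elim_inr,
    conjTranspose_conjTranspose, ketKron_mul_conjTranspose_ketKron, ← kronecker_sum,
    sum_conjTranspose_complementKraus_mul_self, Fin.sum_univ_succ, Fin.cons_zero, Fin.cons_succ,
    hB, conjTranspose_zero, Matrix.zero_mul, zero_add, conjTranspose_single, star_one,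
    single_mul_single_same, mul_one, sum_single_one]
  rw [← add_kronecker, ← Fin.sum_univ_two fun i => single i i (1 : ℂ), sum_single_one,
    one_kronecker_one]

lemma krausMap_degradingKraus_comp_krausMap_flaggedKraus (hB : ∑ k, (B k)ᴴ * B k = 1) :
    krausMap (degradingKraus B) ∘ₗ krausMap (flaggedKraus B) =
      complementMap (flaggedKraus B) := by
  ext1 ρ
  rw [LinearMap.comp_apply, krausMap_degradingKraus, krausMap_flaggedKraus,
    complementMap_flaggedKraus]
  simp only [submatrix_add, Pi.add_apply, submatrix_single_kronecker]
  simp [trace_krausMap hB]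

end Flagged

/-- for any CPT map `N`, the channel `Φ(ρ) = ½|0⟩⟨0|⊗ρ + ½|1⟩⟨1|⊗N(ρ)`
is degradable: some CPTP `Ψ` satisfies `Ψ ∘ Φ = Φ^C`. -/
theorem flagged_identity_channel_degradable {d f : ℕ}
    (B : Fin f → Matrix (Fin d) (Fin d) ℂ)
    (hB : ∑ k, (B k)ᴴ * B k = 1) :
    (∀ ρ : Matrix (Fin d) (Fin d) ℂ,
      krausMap (bigA B) ρ = Matrix.of fun p q =>
        if p.1 = 0 ∧ q.1 = 0 then (2 : ℂ)⁻¹ * ρ p.2 q.2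
        else if p.1 = 1 ∧ q.1 = 1 then (2 : ℂ)⁻¹ * (krausMap B ρ) p.2 q.2
        else 0) ∧
    ∃ Ψ : Matrix (Fin 2 × Fin d) (Fin 2 × Fin d) ℂ →ₗ[ℂ] Matrix (Fin (f + 1)) (Fin (f + 1)) ℂ,
      IsCPTP Ψ ∧ Ψ ∘ₗ krausMap (bigA B) = complementMap (bigA B) := by
  have hΦ : krausMap (bigA B) = (2 : ℂ)⁻¹ • krausMap (flaggedKraus B) := by
    rw [bigA_eq_smul_flaggedKraus, krausMap_smul, inv_sqrt_two_mul_star]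
  have hΦC : complementMap (bigA B) = (2 : ℂ)⁻¹ • complementMap (flaggedKraus B) := by
    rw [bigA_eq_smul_flaggedKraus, complementMap_smul, inv_sqrt_two_mul_star]
  refine ⟨fun ρ => ?_, krausMap (degradingKraus B),
    isCPTP_krausMap (sum_conjTranspose_degradingKraus_mul_self B hB), ?_⟩
  · rw [hΦ, LinearMap.smul_apply, krausMap_flaggedKraus]
    ext ⟨u, b⟩ ⟨v, c⟩
    fin_cases u <;> fin_cases v <;> simp
  · rw [hΦ, hΦC, LinearMap.comp_smul, krausMap_degradingKraus_comp_krausMap_flaggedKraus B hB]
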